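/- Let θ be an inner function, u an inner function, and suppose u divides θ. Then the dual truncated Toeplitz operator D_u on K_θᗮ = θH² ⊕ (H²)ᗮ is a partial isometry. -/

import Mathlib

noncomputable section
open MeasureTheory Complex Real Filter

instance : Fact ((0:ℝ) < 2 * π) := ⟨by positivity⟩

/-- Normalized Lebesgue (Haar) measure on the circle `ℝ / 2πℤ`. -/
abbrev μT : Measure (AddCircle (2 * π)) := AddCircle.haarAddCircle

/-- `L²(𝕋)`. -/
abbrev L2T := Lp ℂ 2 μT

/-- The Hardy space `H²`, the closed span of the nonnegative Fourier modes in `L²(𝕋)`. -/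
def hardy : Submodule ℂ L2T :=
  (Submodule.span ℂ (Set.range fun n : ℕ => fourierLp 2 (n : ℤ))).topologicalClosure

instance : CompleteSpace hardy :=
  (Submodule.isClosed_topologicalClosure _).completeSpace_coe

instance (K : Submodule ℂ L2T) : CompleteSpace Kᗮ :=
  K.isClosed_orthogonal.completeSpace_coe

/-- An inner function: (essentially) bounded measurable, unimodular a.e., with vanishing
negative Fourier coefficients (i.e. belonging to `H^∞`). -/
structure IsInner (u : AddCircle (2 * π) → ℂ) : Prop where
  meas : AEStronglyMeasurable u μT
  unimod : ∀ᵐ t ∂μT, ‖u t‖ = 1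
  analytic : ∀ n : ℤ, n < 0 → fourierCoeff u n = 0

/-- `θ · H²`, the image of the Hardy space under multiplication by `θ`. -/
def mulHardy (θ : AddCircle (2 * π) → ℂ) : Submodule ℂ L2T where
  carrier := {g : L2T | ∃ h : L2T, h ∈ hardy ∧ ⇑g =ᵐ[μT] fun t => θ t * h t}
  zero_mem' := by
    refine ⟨0, hardy.zero_mem, ?_⟩
    filter_upwards [Lp.coeFn_zero ℂ 2 μT] with t ht
    simp [ht]
  add_mem' := by
    rintro g₁ g₂ ⟨h₁, hh₁, e₁⟩ ⟨h₂, hh₂, e₂⟩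
    refine ⟨h₁ + h₂, hardy.add_mem hh₁ hh₂, ?_⟩
    filter_upwards [Lp.coeFn_add g₁ g₂, Lp.coeFn_add h₁ h₂, e₁, e₂] with t a b c d
    simp only [a, b, Pi.add_apply, c, d]
    ring
  smul_mem' := by
    rintro c g ⟨h, hh, e⟩
    refine ⟨c • h, hardy.smul_mem c hh, ?_⟩
    filter_upwards [Lp.coeFn_smul c g, Lp.coeFn_smul c h, e] with t a b hc
    simp only [a, b, Pi.smul_apply, hc, smul_eq_mul]
    ring

/-- The model space `K_θ = H² ⊖ θH²`. -/
def modelSpace (θ : AddCircle (2 * π) → ℂ) : Submodule ℂ L2T :=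
  hardy ⊓ (mulHardy θ)ᗮ

instance (θ : AddCircle (2 * π) → ℂ) : CompleteSpace (modelSpace θ) := by
  refine IsClosed.completeSpace_coe (hs := ?_)
  have h : (modelSpace θ : Set L2T) = (hardy : Set L2T) ∩ ((mulHardy θ)ᗮ : Set L2T) := rfl
  rw [h]
  exact (Submodule.isClosed_topologicalClosure _).inter ((mulHardy θ).isClosed_orthogonal)

/-- The orthogonal projection of `L²(𝕋)` onto `H²`. -/
def Ph : L2T →L[ℂ] hardy := Submodule.orthogonalProjectionOnto hardy

/-- The orthogonal projection of `L²(𝕋)` onto the model space `K_θ`. -/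
def Pmod (θ : AddCircle (2 * π) → ℂ) : L2T →L[ℂ] modelSpace θ :=
  Submodule.orthogonalProjectionOnto (modelSpace θ)

/-- The orthogonal projection of `L²(𝕋)` onto `K_θᗮ`. -/
def Qmod (θ : AddCircle (2 * π) → ℂ) : L2T →L[ℂ] (modelSpace θ)ᗮ :=
  Submodule.orthogonalProjectionOnto (modelSpace θ)ᗮ

/-- `A` is the truncated Toeplitz operator with symbol `φ` on `K_θ`. -/
def IsTTO (θ φ : AddCircle (2 * π) → ℂ) (A : modelSpace θ →L[ℂ] modelSpace θ) : Prop :=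
  ∀ (f : modelSpace θ) (g : L2T),
    (⇑g =ᵐ[μT] fun t => φ t * (f : L2T) t) → A f = Pmod θ g

/-- `B` is the truncated Hankel operator with symbol `φ` : `K_θ → K_θᗮ`. -/
def IsTHO (θ φ : AddCircle (2 * π) → ℂ) (B : modelSpace θ →L[ℂ] (modelSpace θ)ᗮ) : Prop :=
  ∀ (f : modelSpace θ) (g : L2T),
    (⇑g =ᵐ[μT] fun t => φ t * (f : L2T) t) → B f = Qmod θ g

/-- `D` is the dual truncated Toeplitz operator with symbol `φ` on `K_θᗮ`. -/
def IsDTTO (θ φ : AddCircle (2 * π) → ℂ) (D : (modelSpace θ)ᗮ →L[ℂ] (modelSpace θ)ᗮ) : Prop :=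
  ∀ (f : (modelSpace θ)ᗮ) (g : L2T),
    (⇑g =ᵐ[μT] fun t => φ t * (f : L2T) t) → D f = Qmod θ g

open scoped InnerProductSpace

namespace Stmt17
open MeasureTheory Complex Real

/-- A unimodular (a.e.) measurable symbol. -/
structure Uni (u : AddCircle (2 * π) → ℂ) : Prop where
  meas : AEStronglyMeasurable u μT
  unimod : ∀ᵐ t ∂μT, ‖u t‖ = 1

lemma _root_.IsInner.uni {u : AddCircle (2 * π) → ℂ} (hu : IsInner u) : Uni u := ⟨hu.meas, hu.unimod⟩

lemma Uni.conj {u : AddCircle (2 * π) → ℂ} (hu : Uni u) :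
    Uni fun t => (starRingEnd ℂ) (u t) := by
  refine ⟨?_, ?_⟩
  · exact RCLike.continuous_conj.comp_aestronglyMeasurable hu.meas
  · filter_upwards [hu.unimod] with t ht
    simpa using ht

variable {u v θ w : AddCircle (2 * π) → ℂ}

lemma Uni.memL2_mul (hu : Uni u) (f : L2T) :
    MemLp (fun t => u t * f t) 2 μT := by
  refine (Lp.memLp f).of_le (hu.meas.mul (Lp.aestronglyMeasurable f)) ?_
  filter_upwards [hu.unimod] with t ht
  simp [ht]

/-- Multiplication by a unimodular symbol, as a map `L²(𝕋) → L²(𝕋)`. -/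
def M (hu : Uni u) (f : L2T) : L2T := (hu.memL2_mul f).toLp _

lemma coeFn_M (hu : Uni u) (f : L2T) : ⇑(M hu f) =ᵐ[μT] fun t => u t * f t :=
  (hu.memL2_mul f).coeFn_toLp

lemma norm_M (hu : Uni u) (f : L2T) : ‖M hu f‖ = ‖f‖ := by
  rw [M, Lp.norm_toLp, Lp.norm_def]
  congr 1
  refine eLpNorm_congr_norm_ae ?_
  filter_upwards [hu.unimod] with t ht
  simp [ht]

lemma inner_M_left (hu : Uni u) (f g : L2T) :
    ⟪M hu f, g⟫_ℂ = ⟪f, M hu.conj g⟫_ℂ := by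
  rw [L2.inner_def, L2.inner_def]
  refine integral_congr_ae ?_
  filter_upwards [coeFn_M hu f, coeFn_M hu.conj g] with t h1 h2
  simp only [h1, h2, RCLike.inner_apply, map_mul]
  ring

lemma inner_M_right (hu : Uni u) (f g : L2T) :
    ⟪f, M hu g⟫_ℂ = ⟪M hu.conj f, g⟫_ℂ := by
  rw [← inner_conj_symm, inner_M_left, inner_conj_symm]

lemma M_M_conj (hu : Uni u) (f : L2T) : M hu (M hu.conj f) = f := by
  refine Lp.ext ?_
  filter_upwards [coeFn_M hu (M hu.conj f), coeFn_M hu.conj f, hu.unimod] with t h1 h2 h3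
  rw [h1, h2, ← mul_assoc, mul_comm (u t), Complex.conj_mul']
  simp [h3]

lemma mem_orthogonal_closure_span {S : Set L2T} {v : L2T}
    (h : ∀ x ∈ S, ⟪v, x⟫_ℂ = 0) :
    v ∈ ((Submodule.span ℂ S).topologicalClosure)ᗮ := by
  rw [Submodule.mem_orthogonal']
  intro x hx
  have hle : Submodule.span ℂ S ≤ LinearMap.ker (innerSL ℂ v : L2T →ₗ[ℂ] ℂ) := by
    rw [Submodule.span_le]
    intro y hy
    simpa [LinearMap.mem_ker] using h y hy
  have hker : (Submodule.span ℂ S).topologicalClosure ≤ LinearMap.ker (innerSL ℂ v : L2T →ₗ[ℂ] ℂ) :=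
    Submodule.topologicalClosure_minimal _ hle (ContinuousLinearMap.isClosed_ker _)
  simpa using hker hx

lemma fourierCoeff_eq_inner (f : L2T) (n : ℤ) :
    fourierCoeff (⇑f) n = ⟪(fourierLp 2 n : L2T), f⟫_ℂ := by
  rw [← fourierBasis_repr, fourierBasis.repr_apply_apply, coe_fourierBasis]

lemma fourierCoeff_eq_zero_of_mem_hardy {f : L2T} (hf : f ∈ hardy) {n : ℤ} (hn : n < 0) :
    fourierCoeff (⇑f) n = 0 := by
  rw [fourierCoeff_eq_inner]
  have h : (fourierLp 2 n : L2T) ∈ hardyᗮ := by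
    refine mem_orthogonal_closure_span ?_
    rintro x ⟨m, rfl⟩
    exact orthonormal_fourier.2 (by omega : n ≠ (m : ℤ))
  exact (Submodule.mem_orthogonal' _ _).mp h f hf

/-- The closed span of the negative Fourier modes. -/
def negSpan : Submodule ℂ L2T :=
  (Submodule.span ℂ (Set.range fun n : ℕ => (fourierLp 2 (-(n : ℤ) - 1) : L2T))).topologicalClosure

lemma hardy_le_negSpan_orth : hardy ≤ negSpanᗮ := by
  have hle : Submodule.span ℂ (Set.range fun n : ℕ => (fourierLp 2 (n : ℤ) : L2T)) ≤ negSpanᗮ := by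
    rw [Submodule.span_le]
    rintro x ⟨m, rfl⟩
    refine mem_orthogonal_closure_span ?_
    rintro y ⟨k, rfl⟩
    exact orthonormal_fourier.2 (by omega : (m : ℤ) ≠ -(k : ℤ) - 1)
  exact Submodule.topologicalClosure_minimal _ hle negSpan.isClosed_orthogonal

lemma mem_hardy_of_fourierCoeff {f : L2T}
    (hf : ∀ n : ℤ, n < 0 → fourierCoeff (⇑f) n = 0) : f ∈ hardy := by
  have hforth : f ∈ negSpanᗮ := by
    refine mem_orthogonal_closure_span ?_
    rintro x ⟨m, rfl⟩
    rw [← inner_conj_symm, ← fourierCoeff_eq_inner, hf _ (by omega), map_zero]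
  set y := (Submodule.orthogonalProjectionOnto hardy f : L2T) with hy
  have hyh : y ∈ hardy := SetLike.coe_mem _
  have hr : f - y ∈ hardyᗮ := Submodule.sub_starProjection_mem_orthogonal (K := hardy) f
  have hrneg : ∀ n : ℤ, ⟪(fourierBasis (T := 2 * π) n : L2T), f - y⟫_ℂ = 0 := by
    intro n
    rw [coe_fourierBasis]
    rcases lt_or_ge n 0 with hn | hn
    · have hfy : f - y ∈ negSpanᗮ :=
        Submodule.sub_mem _ hforth (hardy_le_negSpan_orth hyh)
      have hmem : (fourierLp 2 n : L2T) ∈ negSpan := by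
        apply Submodule.le_topologicalClosure
        apply Submodule.subset_span
        have he : -(((-n - 1).toNat : ℕ) : ℤ) - 1 = n := by omega
        exact ⟨(-n - 1).toNat,
          by show (fourierLp 2 (-(((-n - 1).toNat : ℕ) : ℤ) - 1) : L2T) = _; rw [he]⟩
      exact Submodule.inner_right_of_mem_orthogonal hmem hfy
    · have hmem : (fourierLp 2 n : L2T) ∈ hardy := by
        apply Submodule.le_topologicalClosure
        apply Submodule.subset_span
        have he : ((n.toNat : ℕ) : ℤ) = n := by omega
        exact ⟨n.toNat, by show (fourierLp 2 ((n.toNat : ℕ) : ℤ) : L2T) = _; rw [he]⟩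
      exact Submodule.inner_right_of_mem_orthogonal hmem hr
  have hzero : f - y = 0 := by
    have hsum := fourierBasis.hasSum_repr (f - y)
    have hfun : (fun i : ℤ => fourierBasis.repr (f - y) i • fourierBasis (T := 2 * π) i)
        = fun _ => (0 : L2T) := by
      funext i
      rw [fourierBasis.repr_apply_apply, hrneg i, zero_smul]
    rw [hfun] at hsum
    exact (hasSum_zero.unique hsum).symm
  have : f = y := by rwa [sub_eq_zero] at hzero
  rw [this]; exact hyh

lemma fourierCoeff_congr {f g : AddCircle (2 * π) → ℂ} (h : f =ᵐ[μT] g) (n : ℤ) :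
    fourierCoeff f n = fourierCoeff g n := by
  unfold fourierCoeff
  refine integral_congr_ae ?_
  filter_upwards [h] with t ht
  rw [ht]

lemma fourierCoeff_M_conj (hu : Uni u) (n m : ℤ) :
    fourierCoeff (⇑(M hu.conj (fourierLp 2 n : L2T))) m
      = (starRingEnd ℂ) (fourierCoeff u (n - m)) := by
  have h1 : ⇑(M hu.conj (fourierLp 2 n : L2T)) =ᵐ[μT]
      fun t => (starRingEnd ℂ) (u t) * fourier n t := by
    filter_upwards [coeFn_M hu.conj (fourierLp 2 n : L2T), coeFn_fourierLp 2 n] with t h1 h2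
    rw [h1, h2]
  rw [fourierCoeff_congr h1]
  unfold fourierCoeff
  rw [← integral_conj]
  refine integral_congr_ae (Filter.Eventually.of_forall fun t => ?_)
  have h2 : (starRingEnd ℂ) ((fourier (-(n - m))) t) = fourier (n - m) t := by
    rw [fourier_neg, Complex.conj_conj]
  simp only [smul_eq_mul]
  rw [map_mul, h2, show n - m = -m + n by ring, fourier_add]
  ring

lemma M_mem_hardy (hu : IsInner u) {f : L2T} (hf : f ∈ hardy) : M hu.uni f ∈ hardy := by
  refine mem_hardy_of_fourierCoeff fun n hn => ?_
  rw [fourierCoeff_eq_inner, inner_M_right hu.uni]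
  set x := M hu.uni.conj (fourierLp 2 n : L2T) with hx
  have hsum := fourierBasis.hasSum_inner_mul_inner x f
  have hzero : (fun m : ℤ =>
      ⟪x, fourierBasis (T := 2 * π) m⟫_ℂ * ⟪fourierBasis (T := 2 * π) m, f⟫_ℂ)
      = fun _ => (0 : ℂ) := by
    funext m
    rcases lt_or_ge m 0 with hm | hm
    · have h2 : ⟪fourierBasis (T := 2 * π) m, f⟫_ℂ = 0 := by
        rw [← fourierBasis.repr_apply_apply, fourierBasis_repr]
        exact fourierCoeff_eq_zero_of_mem_hardy hf hm
      rw [h2, mul_zero]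
    · have h2 : ⟪x, fourierBasis (T := 2 * π) m⟫_ℂ = 0 := by
        rw [← inner_conj_symm, ← fourierBasis.repr_apply_apply, fourierBasis_repr, hx,
          fourierCoeff_M_conj hu.uni n m, hu.analytic (n - m) (by omega), map_zero, map_zero]
      rw [h2, zero_mul]
  rw [hzero] at hsum
  exact hsum.unique hasSum_zero

lemma M_conj_M (hu : Uni u) (f : L2T) : M hu.conj (M hu f) = f := by
  refine Lp.ext ?_
  filter_upwards [coeFn_M hu.conj (M hu f), coeFn_M hu f, hu.unimod] with t h1 h2 h3
  rw [h1, h2, ← mul_assoc, mul_comm ((starRingEnd ℂ) (u t)) (u t), Complex.mul_conj']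
  simp [h3]

lemma M_comm {v : AddCircle (2 * π) → ℂ} (hu : Uni u) (hv : Uni v) (f : L2T) :
    M hu (M hv f) = M hv (M hu f) := by
  refine Lp.ext ?_
  filter_upwards [coeFn_M hu (M hv f), coeFn_M hv f, coeFn_M hv (M hu f), coeFn_M hu f]
    with t h1 h2 h3 h4
  rw [h1, h2, h3, h4]; ring

lemma isometry_M (hu : Uni u) : Isometry (M hu) := by
  refine Isometry.of_dist_eq fun f g => ?_
  rw [dist_eq_norm, dist_eq_norm]
  have h : M hu f - M hu g = M hu (f - g) := by
    refine Lp.ext ?_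
    filter_upwards [Lp.coeFn_sub (M hu f) (M hu g), coeFn_M hu f, coeFn_M hu g,
      coeFn_M hu (f - g), Lp.coeFn_sub f g] with t h1 h2 h3 h4 h5
    rw [h1, Pi.sub_apply, h2, h3, h4, h5, Pi.sub_apply]
    ring
  rw [h, norm_M]

lemma mem_mulHardy_iff {θ : AddCircle (2 * π) → ℂ} (hθ : Uni θ) {g : L2T} :
    g ∈ mulHardy θ ↔ ∃ h, h ∈ hardy ∧ g = M hθ h := by
  constructor
  · rintro ⟨h, hh, he⟩
    exact ⟨h, hh, Lp.ext (he.trans (coeFn_M hθ h).symm)⟩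
  · rintro ⟨h, hh, rfl⟩
    exact ⟨h, hh, coeFn_M hθ h⟩

lemma isClosed_mulHardy {θ : AddCircle (2 * π) → ℂ} (hθ : Uni θ) :
    IsClosed (mulHardy θ : Set L2T) := by
  have himg : (mulHardy θ : Set L2T) = M hθ.conj ⁻¹' (hardy : Set L2T) := by
    ext g
    simp only [Set.mem_preimage, SetLike.mem_coe]
    rw [mem_mulHardy_iff hθ]
    constructor
    · rintro ⟨h, hh, rfl⟩
      rw [M_conj_M hθ h]
      exact hh
    · intro hmem
      exact ⟨M hθ.conj g, hmem, (M_M_conj hθ g).symm⟩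
  rw [himg]
  exact (Submodule.isClosed_topologicalClosure _).preimage (isometry_M hθ.conj).continuous

lemma mulHardy_le_hardy {θ : AddCircle (2 * π) → ℂ} (hθ : IsInner θ) : mulHardy θ ≤ hardy := by
  intro g hg
  obtain ⟨h, hh, rfl⟩ := (mem_mulHardy_iff hθ.uni).mp hg
  exact M_mem_hardy hθ hh

lemma mem_hardy_orth {θ : AddCircle (2 * π) → ℂ} (hθ : IsInner θ) {v : L2T}
    (h1 : v ∈ (mulHardy θ)ᗮ) (h2 : v ∈ (modelSpace θ)ᗮ) : v ∈ hardyᗮ := by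
  haveI : CompleteSpace (mulHardy θ) := (isClosed_mulHardy hθ.uni).completeSpace_coe
  rw [Submodule.mem_orthogonal]
  intro x hx
  set p := (Submodule.orthogonalProjectionOnto (mulHardy θ) x : L2T) with hp
  have hpm : p ∈ mulHardy θ := SetLike.coe_mem _
  have hxp : x - p ∈ (mulHardy θ)ᗮ := Submodule.sub_starProjection_mem_orthogonal (K := mulHardy θ) x
  have hxph : x - p ∈ hardy := hardy.sub_mem hx (mulHardy_le_hardy hθ hpm)
  have hmod : x - p ∈ modelSpace θ := Submodule.mem_inf.mpr ⟨hxph, hxp⟩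
  calc ⟪x, v⟫_ℂ = ⟪p + (x - p), v⟫_ℂ := by rw [add_sub_cancel]
    _ = ⟪p, v⟫_ℂ + ⟪x - p, v⟫_ℂ := inner_add_left _ _ _
    _ = 0 := by
        rw [Submodule.inner_right_of_mem_orthogonal hpm h1,
          Submodule.inner_right_of_mem_orthogonal hmod h2, add_zero]

end Stmt17

open Stmt17 in
/-- if the inner function `u` divides the inner function `θ` (`θ = u·w`),
then the dual truncated Toeplitz operator `D_u` on `K_θᗮ` is a partial isometry. -/
theorem stmt_17 (θ u w : AddCircle (2 * π) → ℂ)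
    (hθ : IsInner θ) (hu : IsInner u) (hw : IsInner w)
    (hdiv : θ =ᵐ[μT] fun t => u t * w t)
    (D : (modelSpace θ)ᗮ →L[ℂ] (modelSpace θ)ᗮ) (hD : IsDTTO θ u D) :
    ∀ f ∈ (LinearMap.ker (D : (modelSpace θ)ᗮ →ₗ[ℂ] (modelSpace θ)ᗮ))ᗮ, ‖D f‖ = ‖f‖ := by
  intro f hf
  have hDg : ∀ g : (modelSpace θ)ᗮ, D g = Qmod θ (M hu.uni (g : L2T)) :=
    fun g => hD g _ (coeFn_M hu.uni (g : L2T))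
  have hkey : M hu.uni (f : L2T) ∈ (modelSpace θ)ᗮ := by
    rw [Submodule.mem_orthogonal]
    intro k hk
    have hk' : k ∈ hardy ⊓ (mulHardy θ)ᗮ := hk
    obtain ⟨hk1, hk2⟩ := Submodule.mem_inf.mp hk'
    rw [inner_M_right hu.uni]
    set m := (Submodule.orthogonalProjectionOnto (modelSpace θ) (M hu.uni.conj k) : L2T) with hm
    have hmmem : m ∈ modelSpace θ := SetLike.coe_mem _
    have hmmem' : m ∈ hardy ⊓ (mulHardy θ)ᗮ := hmmem
    obtain ⟨hm1, hm2⟩ := Submodule.mem_inf.mp hmmem'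
    set q := M hu.uni.conj k - m with hq
    have hqmem : q ∈ (modelSpace θ)ᗮ := Submodule.sub_starProjection_mem_orthogonal (K := modelSpace θ) _
    have hm' : m = M hu.uni.conj k - q := by rw [hq, sub_sub_cancel]
    -- q is orthogonal to θ·H²
    have hqMH : q ∈ (mulHardy θ)ᗮ := by
      rw [Submodule.mem_orthogonal]
      intro g hg
      obtain ⟨h, hh, rfl⟩ := (mem_mulHardy_iff hθ.uni).mp hg
      have e1 : ⟪M hθ.uni h, m⟫_ℂ = 0 :=
        Submodule.inner_right_of_mem_orthogonal hg hm2
      have e2 : ⟪M hθ.uni h, M hu.uni.conj k⟫_ℂ = 0 := by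
        rw [← inner_M_left hu.uni, M_comm hu.uni hθ.uni]
        have hmem : M hθ.uni (M hu.uni h) ∈ mulHardy θ :=
          (mem_mulHardy_iff hθ.uni).mpr ⟨_, M_mem_hardy hu hh, rfl⟩
        exact Submodule.inner_right_of_mem_orthogonal hmem hk2
      rw [hq, inner_sub_right, e1, e2, sub_zero]
    -- q is orthogonal to all of H²
    have hqH : q ∈ hardyᗮ := mem_hardy_orth hθ hqMH hqmem
    -- m is orthogonal to w·H²
    have hA : ∀ h, h ∈ hardy → ⟪M hw.uni h, m⟫_ℂ = 0 := by
      intro h hh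
      have e2 : ⟪M hw.uni h, q⟫_ℂ = 0 :=
        Submodule.inner_right_of_mem_orthogonal (M_mem_hardy hw hh) hqH
      have e1 : ⟪M hw.uni h, M hu.uni.conj k⟫_ℂ = 0 := by
        rw [← inner_M_left hu.uni]
        have hmem : M hu.uni (M hw.uni h) ∈ mulHardy θ := by
          refine ⟨h, hh, ?_⟩
          filter_upwards [coeFn_M hu.uni (M hw.uni h), coeFn_M hw.uni h, hdiv] with t a b c
          rw [a, b, c]
          ring
        exact Submodule.inner_right_of_mem_orthogonal hmem hk2
      rw [hm', inner_sub_right, e1, e2, sub_zero]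
    -- u·m lies in the model space
    have hC : M hu.uni m ∈ modelSpace θ := by
      have : M hu.uni m ∈ hardy ⊓ (mulHardy θ)ᗮ := by
        refine Submodule.mem_inf.mpr ⟨M_mem_hardy hu hm1, ?_⟩
        rw [Submodule.mem_orthogonal]
        intro g hg
        obtain ⟨h, hh, rfl⟩ := (mem_mulHardy_iff hθ.uni).mp hg
        rw [inner_M_right hu.uni]
        have hMw : M hu.uni.conj (M hθ.uni h) = M hw.uni h := by
          refine MeasureTheory.Lp.ext ?_
          filter_upwards [coeFn_M hu.uni.conj (M hθ.uni h), coeFn_M hθ.uni h,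
            coeFn_M hw.uni h, hdiv, hu.unimod] with t a b c d e
          rw [a, b, d, c,
            show (starRingEnd ℂ) (u t) * (u t * w t * h t)
              = u t * (starRingEnd ℂ) (u t) * (w t * h t) by ring,
            Complex.mul_conj']
          simp [e]
        rw [hMw]
        exact hA h hh
      exact this
    -- q lies in the kernel of D
    have hqker : (⟨q, hqmem⟩ : (modelSpace θ)ᗮ) ∈ LinearMap.ker (D : (modelSpace θ)ᗮ →ₗ[ℂ] (modelSpace θ)ᗮ) := by
      rw [LinearMap.mem_ker, ContinuousLinearMap.coe_coe, hDg]
      have hqc : ⇑q =ᵐ[μT] ⇑(M hu.uni.conj k) - ⇑m := by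
        rw [hq]; exact MeasureTheory.Lp.coeFn_sub _ _
      have hMq : M hu.uni q = k - M hu.uni m := by
        refine MeasureTheory.Lp.ext ?_
        filter_upwards [coeFn_M hu.uni q, hqc, coeFn_M hu.uni.conj k,
          MeasureTheory.Lp.coeFn_sub k (M hu.uni m), coeFn_M hu.uni m, hu.unimod]
          with t a b c d e f2
        simp only [Pi.sub_apply] at b d
        rw [a, b, d, e, c]
        have h1 : u t * (starRingEnd ℂ) (u t) = 1 := by
          rw [Complex.mul_conj']
          simp [f2]
        rw [mul_sub, ← mul_assoc, h1, one_mul]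
      rw [hMq]
      have hsub : k - M hu.uni m ∈ modelSpace θ := Submodule.sub_mem _ hk hC
      exact Submodule.orthogonalProjectionOnto_apply_of_mem_orthogonal
        (Submodule.le_orthogonal_orthogonal _ hsub)
    -- conclude
    have hsplit : M hu.uni.conj k = m + q := by rw [hq, add_sub_cancel]
    have em : ⟪m, (f : L2T)⟫_ℂ = 0 :=
      Submodule.inner_right_of_mem_orthogonal hmmem f.2
    have eq0 : ⟪q, (f : L2T)⟫_ℂ = 0 := by
      have h0 := Submodule.inner_right_of_mem_orthogonal hqker hf
      simpa [Submodule.coe_inner] using h0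
    rw [hsplit, inner_add_left, em, eq0, add_zero]
  have hfix : (Qmod θ (M hu.uni (f : L2T)) : L2T) = M hu.uni (f : L2T) :=
    Submodule.starProjection_eq_self_iff.mpr hkey
  rw [← Submodule.norm_coe (D f), ← Submodule.norm_coe f, hDg f, hfix, norm_M]
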